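/- arXiv:cs/0702093 — 3 statements merged into one kernel-verified Lean document; each statement's English description precedes it below -/
import Mathlib

section
/- Let K ≥ 2 and let X₁, …, X_K, G be independent random variables, each exponentially distributed with rate 1. Let M = max(X₁,…,X_K). Then E[log(G/M) | G ≥ M] ≤ 2·log 2. -/
/-!
On `{M ≤ G}` we have `log (G / M) = ∫_M^G dt / t` (with `M > 0` a.s.), so by Tonelli the numerator
is `∫_0^∞ P(M ≤ t < G) dt / t = ∫_0^∞ (1 - e^{-t})^K e^{-t} dt / t`, by independence. With
`u = 1 - e^{-t}` the inequality `t ≥ -log (1 - u) ≥ u + u² / 2` gives `u / t ≤ 1 - u / 3`, and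
`∫_0^∞ u^n e^{-t} dt = 1 / (n + 1)`, so the numerator is at most `1 / K - 1 / (3 (K + 1))`.
Independence of `M` and `G` gives `P(M ≤ G) = ∫_0^∞ (1 - e^{-t})^K e^{-t} dt = 1 / (K + 1)`,
hence the conditional expectation is at most `2 / 3 + 1 / K ≤ 7 / 6 < 2 log 2`.
-/

open MeasureTheory ProbabilityTheory Real Set Filter Topology
open scoped ENNReal

section ExponentialIntegrals

lemma one_sub_exp_neg_nonneg {t : ℝ} (ht : 0 ≤ t) : 0 ≤ 1 - exp (-t) := by
  simpa using exp_le_one_iff.2 (neg_nonpos.2 ht)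

lemma hasDerivAt_one_sub_exp_neg (t : ℝ) :
    HasDerivAt (fun t : ℝ => 1 - exp (-t)) (exp (-t)) t := by
  simpa using ((hasDerivAt_neg t).exp).const_sub 1

lemma integrableOn_one_sub_exp_neg_pow_mul_exp_neg (n : ℕ) :
    IntegrableOn (fun t : ℝ => (1 - exp (-t)) ^ n * exp (-t)) (Ioi 0) := by
  have hexp : IntegrableOn (fun t : ℝ => exp (-t)) (Ioi 0) := by
    simpa using exp_neg_integrableOn_Ioi 0 zero_lt_one
  refine Integrable.mono hexp
    (by fun_prop : Continuous fun t : ℝ => (1 - exp (-t)) ^ n * exp (-t)).aestronglyMeasurable ?_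
  filter_upwards [ae_restrict_mem measurableSet_Ioi] with t (ht : 0 < t)
  have hu := one_sub_exp_neg_nonneg ht.le
  rw [norm_mul, norm_pow, norm_of_nonneg hu, norm_of_nonneg (exp_pos _).le]
  exact mul_le_of_le_one_left (exp_pos _).le
    (pow_le_one₀ hu (by linarith [exp_pos (-t)]))

lemma integral_one_sub_exp_neg_pow_mul_exp_neg (n : ℕ) :
    ∫ t in Ioi 0, (1 - exp (-t)) ^ n * exp (-t) = 1 / (n + 1) := by
  have hderiv (t : ℝ) : HasDerivAt (fun t => (1 - exp (-t)) ^ (n + 1) / (n + 1))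
      ((1 - exp (-t)) ^ n * exp (-t)) t := by
    refine (((hasDerivAt_one_sub_exp_neg t).pow (n + 1)).div_const ((n : ℝ) + 1)).congr_deriv ?_
    push_cast
    field_simp
  have hlim : Tendsto (fun t : ℝ => (1 - exp (-t)) ^ (n + 1) / (n + 1)) atTop
      (𝓝 ((1 - 0) ^ (n + 1) / (n + 1))) :=
    ((tendsto_exp_neg_atTop_nhds_zero.const_sub 1).pow (n + 1)).div_const _
  rw [integral_Ioi_of_hasDerivAt_of_tendsto' (fun t _ => hderiv t)
    (integrableOn_one_sub_exp_neg_pow_mul_exp_neg n) hlim]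
  simp

lemma lintegral_one_sub_exp_neg_pow_mul_exp_neg (n : ℕ) :
    ∫⁻ t in Ioi 0, ENNReal.ofReal ((1 - exp (-t)) ^ n * exp (-t)) =
      ENNReal.ofReal (1 / (n + 1)) := by
  rw [← ofReal_integral_eq_lintegral_ofReal (integrableOn_one_sub_exp_neg_pow_mul_exp_neg n),
    integral_one_sub_exp_neg_pow_mul_exp_neg]
  filter_upwards [ae_restrict_mem measurableSet_Ioi] with t (ht : 0 < t)
  exact mul_nonneg (pow_nonneg (one_sub_exp_neg_nonneg ht.le) n) (exp_pos _).le

lemma one_sub_exp_neg_add_sq_div_two_le {t : ℝ} (ht : 0 ≤ t) :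
    (1 - exp (-t)) + (1 - exp (-t)) ^ 2 / 2 ≤ t := by
  have hderiv (x : ℝ) : HasDerivAt (fun t => t - (1 - exp (-t)) - (1 - exp (-t)) ^ 2 / 2)
      ((1 - exp (-x)) ^ 2) x := by
    refine (((hasDerivAt_id x).sub (hasDerivAt_one_sub_exp_neg x)).sub
      (((hasDerivAt_one_sub_exp_neg x).pow 2).div_const 2)).congr_deriv ?_
    push_cast
    ring
  have hmono : Monotone (fun t => t - (1 - exp (-t)) - (1 - exp (-t)) ^ 2 / 2) :=
    monotone_of_deriv_nonneg (fun x => (hderiv x).differentiableAt)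
      (fun x => (hderiv x).deriv ▸ sq_nonneg _)
  have := hmono ht
  simp only [neg_zero, exp_zero, sub_self] at this
  norm_num at this
  linarith

/-- With `u = 1 - exp (-t)` this is `u / t ≤ 1 - u / 3`, which follows from `t ≥ u + u² / 2`
because `(1 - u / 3) (1 + u / 2) ≥ 1` on `[0, 1]`. -/
lemma inv_mul_one_sub_exp_neg_pow_succ_le (n : ℕ) {t : ℝ} (ht : 0 < t) :
    t⁻¹ * ((1 - exp (-t)) ^ (n + 1) * exp (-t)) ≤
      (1 - exp (-t)) ^ n * exp (-t) - (1 - exp (-t)) ^ (n + 1) * exp (-t) / 3 := by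
  set u := 1 - exp (-t) with hu
  have hu0 : 0 ≤ u := one_sub_exp_neg_nonneg ht.le
  have hu1 : u ≤ 1 := by linarith [exp_pos (-t)]
  have hut : u ≤ t * (1 - u / 3) := by
    nlinarith [one_sub_exp_neg_add_sq_div_two_le ht.le, mul_nonneg hu0 (sub_nonneg.2 hu1)]
  have hc : 0 ≤ u ^ n * exp (-t) := mul_nonneg (pow_nonneg hu0 n) (exp_pos _).le
  rw [inv_mul_le_iff₀ ht]
  calc u ^ (n + 1) * exp (-t) = u * (u ^ n * exp (-t)) := by ring
    _ ≤ t * (1 - u / 3) * (u ^ n * exp (-t)) := mul_le_mul_of_nonneg_right hut hc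
    _ = _ := by ring

lemma lintegral_inv_mul_one_sub_exp_neg_pow_succ_le (n : ℕ) :
    ∫⁻ t in Ioi 0, ENNReal.ofReal (t⁻¹ * ((1 - exp (-t)) ^ (n + 1) * exp (-t))) ≤
      ENNReal.ofReal (1 / (n + 1) - 1 / (n + 2) / 3) := by
  have hint : IntegrableOn (fun t : ℝ =>
      (1 - exp (-t)) ^ n * exp (-t) - (1 - exp (-t)) ^ (n + 1) * exp (-t) / 3) (Ioi 0) :=
    (integrableOn_one_sub_exp_neg_pow_mul_exp_neg n).sub
      ((integrableOn_one_sub_exp_neg_pow_mul_exp_neg (n + 1)).div_const 3)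
  have hbound : ∀ t ∈ Ioi (0 : ℝ), t⁻¹ * ((1 - exp (-t)) ^ (n + 1) * exp (-t)) ≤
      (1 - exp (-t)) ^ n * exp (-t) - (1 - exp (-t)) ^ (n + 1) * exp (-t) / 3 :=
    fun t ht => inv_mul_one_sub_exp_neg_pow_succ_le n ht
  calc _ ≤ ∫⁻ t in Ioi 0, ENNReal.ofReal
        ((1 - exp (-t)) ^ n * exp (-t) - (1 - exp (-t)) ^ (n + 1) * exp (-t) / 3) :=
        setLIntegral_mono (by fun_prop) fun t ht => ENNReal.ofReal_le_ofReal (hbound t ht)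
    _ = _ := by
      rw [← ofReal_integral_eq_lintegral_ofReal hint, integral_sub, integral_div,
        integral_one_sub_exp_neg_pow_mul_exp_neg, integral_one_sub_exp_neg_pow_mul_exp_neg]
      · push_cast; ring_nf
      · exact integrableOn_one_sub_exp_neg_pow_mul_exp_neg n
      · exact (integrableOn_one_sub_exp_neg_pow_mul_exp_neg (n + 1)).div_const 3
      · filter_upwards [ae_restrict_mem measurableSet_Ioi] with t (ht : 0 < t)
        exact (mul_nonneg (inv_nonneg.2 ht.le) (mul_nonneg
          (pow_nonneg (one_sub_exp_neg_nonneg ht.le) _) (exp_pos _).le)).trans (hbound t ht)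

end ExponentialIntegrals

section ExpMeasure

instance : IsProbabilityMeasure (expMeasure 1) := isProbabilityMeasure_expMeasure one_pos

lemma expMeasure_one_Iic (t : ℝ) : expMeasure 1 (Iic t) = ENNReal.ofReal (1 - exp (-t)) := by
  rw [← ofReal_cdf, cdf_expMeasure_eq one_pos]
  split_ifs with ht
  · simp
  · rw [ENNReal.ofReal_zero, eq_comm, ENNReal.ofReal_eq_zero, sub_nonpos, one_le_exp_iff]
    linarith

lemma expMeasure_one_Ioi {t : ℝ} (ht : 0 ≤ t) :
    expMeasure 1 (Ioi t) = ENNReal.ofReal (exp (-t)) := by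
  rw [← compl_Iic, prob_compl_eq_one_sub measurableSet_Iic, expMeasure_one_Iic,
    ← ENNReal.ofReal_one, ← ENNReal.ofReal_sub _ (one_sub_exp_neg_nonneg ht), sub_sub_cancel]

lemma lintegral_expMeasure_one {f : ℝ → ℝ≥0∞} (hf : Measurable f) :
    ∫⁻ x, f x ∂expMeasure 1 = ∫⁻ x in Ioi 0, ENNReal.ofReal (exp (-x)) * f x := by
  rw [show expMeasure 1 = volume.withDensity (exponentialPDF 1) from rfl,
    lintegral_withDensity_eq_lintegral_mul _ (f := exponentialPDF 1)
      (measurable_exponentialPDFReal 1).ennreal_ofReal hf,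
    setLIntegral_congr Ioi_ae_eq_Ici, ← lintegral_indicator measurableSet_Ici]
  refine lintegral_congr fun x => ?_
  by_cases hx : 0 ≤ x
  · simp [indicator_of_mem (show x ∈ Ici 0 from hx), exponentialPDF_of_nonneg hx]
  · simp [indicator_of_notMem (show x ∉ Ici 0 from hx), exponentialPDF_of_neg (not_le.1 hx)]

end ExpMeasure

section LayerCake

variable {Ω : Type*} [MeasurableSpace Ω] {μ : Measure Ω} {a b : Ω → ℝ}

lemma lintegral_setLIntegral_Ico_eq [SFinite μ] (ha : Measurable a) (hb : Measurable b)
    {w : ℝ → ℝ≥0∞} (hw : Measurable w) :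
    ∫⁻ ω, (∫⁻ t in Ico (a ω) (b ω), w t) ∂μ = ∫⁻ t, w t * μ {ω | a ω ≤ t ∧ t < b ω} := by
  set A : Set (Ω × ℝ) := {p | a p.1 ≤ p.2 ∧ p.2 < b p.1}
  have hA : MeasurableSet A :=
    (measurableSet_le (ha.comp measurable_fst) measurable_snd).inter
      (measurableSet_lt measurable_snd (hb.comp measurable_fst))
  calc ∫⁻ ω, (∫⁻ t in Ico (a ω) (b ω), w t) ∂μ
      = ∫⁻ ω, (∫⁻ t, A.indicator (fun p => w p.2) (ω, t)) ∂μ := by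
        refine lintegral_congr fun ω => ?_
        rw [← lintegral_indicator measurableSet_Ico]
        rfl
    _ = ∫⁻ t, ∫⁻ ω, A.indicator (fun p => w p.2) (ω, t) ∂μ :=
        lintegral_lintegral_swap ((hw.comp measurable_snd).indicator hA).aemeasurable
    _ = ∫⁻ t, w t * μ {ω | a ω ≤ t ∧ t < b ω} :=
        lintegral_congr fun t => lintegral_indicator_const (measurable_prodMk_right hA) (w t)

lemma setLIntegral_Ico_ofReal_inv {x y : ℝ} (hx : 0 < x) (hxy : x ≤ y) :
    ∫⁻ t in Ico x y, ENNReal.ofReal t⁻¹ = ENNReal.ofReal (log (y / x)) := by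
  have hint : IntegrableOn (fun t : ℝ => t⁻¹) (Icc x y) :=
    (continuousOn_inv₀.mono fun t ht => (hx.trans_le ht.1).ne').integrableOn_Icc
  rw [setLIntegral_congr Ico_ae_eq_Ioc, ← ofReal_integral_eq_lintegral_ofReal
    (hint.mono_set Ioc_subset_Icc_self), ← intervalIntegral.integral_of_le hxy,
    integral_inv_of_pos hx (hx.trans_le hxy)]
  filter_upwards [ae_restrict_mem measurableSet_Ioc] with t ht
  exact inv_nonneg.2 (hx.trans ht.1).le

lemma setLIntegral_log_div_eq [SFinite μ] (ha : Measurable a) (hb : Measurable b)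
    (ha_pos : ∀ᵐ ω ∂μ, 0 < a ω) :
    ∫⁻ ω in {ω | a ω ≤ b ω}, ENNReal.ofReal (log (b ω / a ω)) ∂μ =
      ∫⁻ t, ENNReal.ofReal t⁻¹ * μ {ω | a ω ≤ t ∧ t < b ω} := by
  rw [← lintegral_setLIntegral_Ico_eq ha hb measurable_inv.ennreal_ofReal,
    ← lintegral_indicator (measurableSet_le ha hb)]
  refine lintegral_congr_ae (ha_pos.mono fun ω hω => ?_)
  dsimp only
  by_cases hab : a ω ≤ b ω
  · rw [indicator_of_mem (show ω ∈ {ω | a ω ≤ b ω} from hab), setLIntegral_Ico_ofReal_inv hω hab]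
  · rw [indicator_of_notMem (show ω ∉ {ω | a ω ≤ b ω} from hab),
      Ico_eq_empty_of_le (not_le.1 hab).le, Measure.restrict_empty, lintegral_zero_measure]

end LayerCake

lemma setOf_iSup_le_eq_iInter {α ι : Type*} [Finite ι] [Nonempty ι] (X : ι → α → ℝ) (t : ℝ) :
    {x | ⨆ i, X i x ≤ t} = ⋂ i, X i ⁻¹' Iic t := by
  ext x
  simp [ciSup_le_iff (finite_range fun i => X i x).bddAbove]

section MaxOfExponentials

variable {Ω ι : Type*} [MeasurableSpace Ω] {μ : Measure Ω} [Fintype ι]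

lemma measure_preimage_inter_iInter_preimage_of_iIndepFun {β : Type*} [MeasurableSpace β]
    {X : ι → Ω → β} {G : Ω → β}
    (hIndep : iIndepFun (fun i : Option ι => Option.elim i G fun k => X k) μ)
    {B : Set β} {A : ι → Set β} (hB : MeasurableSet B) (hA : ∀ i, MeasurableSet (A i)) :
    μ (G ⁻¹' B ∩ ⋂ i, X i ⁻¹' A i) = μ (G ⁻¹' B) * ∏ i, μ (X i ⁻¹' A i) := by
  have := hIndep.measure_inter_preimage_eq_mul Finset.univ
    (sets := fun j => Option.elim j B A) (by rintro (_ | i) _; exacts [hB, hA i])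
  simpa only [Finset.mem_univ, iInter_true, iInter_option, Fintype.prod_option, Option.elim_none,
    Option.elim_some] using this

lemma measure_preimage_Iic_of_map_eq_expMeasure {Y : Ω → ℝ} (hYm : Measurable Y)
    (hYd : μ.map Y = expMeasure 1) (t : ℝ) :
    μ (Y ⁻¹' Iic t) = ENNReal.ofReal (1 - exp (-t)) := by
  rw [← Measure.map_apply hYm measurableSet_Iic, hYd, expMeasure_one_Iic]

variable [Nonempty ι] {X : ι → Ω → ℝ} {G : Ω → ℝ}

lemma measure_iSup_le_and_lt (hXm : ∀ i, Measurable (X i)) (hGm : Measurable G)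
    (hIndep : iIndepFun (fun i : Option ι => Option.elim i G fun k => X k) μ)
    (hXd : ∀ i, μ.map (X i) = expMeasure 1) (hGd : μ.map G = expMeasure 1) {t : ℝ} (ht : 0 ≤ t) :
    μ {ω | ⨆ i, X i ω ≤ t ∧ t < G ω} =
      ENNReal.ofReal ((1 - exp (-t)) ^ Fintype.card ι * exp (-t)) := by
  have hset : {ω | ⨆ i, X i ω ≤ t ∧ t < G ω} = G ⁻¹' Ioi t ∩ ⋂ i, X i ⁻¹' Iic t := by
    rw [← setOf_iSup_le_eq_iInter, inter_comm]
    rfl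
  rw [hset, measure_preimage_inter_iInter_preimage_of_iIndepFun hIndep measurableSet_Ioi
      fun _ => measurableSet_Iic, ← Measure.map_apply hGm measurableSet_Ioi, hGd,
    expMeasure_one_Ioi ht, Finset.prod_congr rfl fun i _ =>
      measure_preimage_Iic_of_map_eq_expMeasure (hXm i) (hXd i) t, Finset.prod_const,
    Finset.card_univ, ← ENNReal.ofReal_pow (one_sub_exp_neg_nonneg ht),
    ← ENNReal.ofReal_mul (exp_pos _).le, mul_comm]

lemma measure_iSup_le (hXm : ∀ i, Measurable (X i))
    (hIndep : iIndepFun (fun i : Option ι => Option.elim i G fun k => X k) μ)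
    (hXd : ∀ i, μ.map (X i) = expMeasure 1) {t : ℝ} (ht : 0 ≤ t) :
    μ {ω | ⨆ i, X i ω ≤ t} = ENNReal.ofReal ((1 - exp (-t)) ^ Fintype.card ι) := by
  have := hIndep.isProbabilityMeasure
  have := measure_preimage_inter_iInter_preimage_of_iIndepFun hIndep MeasurableSet.univ
    (A := fun _ => Iic t) fun _ => measurableSet_Iic
  rw [preimage_univ, univ_inter, measure_univ, one_mul] at this
  rw [setOf_iSup_le_eq_iInter, this, Finset.prod_congr rfl fun i _ =>
      measure_preimage_Iic_of_map_eq_expMeasure (hXm i) (hXd i) t, Finset.prod_const,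
    Finset.card_univ, ← ENNReal.ofReal_pow (one_sub_exp_neg_nonneg ht)]

lemma ae_iSup_pos (hXm : ∀ i, Measurable (X i)) (hXd : ∀ i, μ.map (X i) = expMeasure 1) :
    ∀ᵐ ω ∂μ, 0 < ⨆ i, X i ω := by
  obtain ⟨i⟩ := ‹Nonempty ι›
  have hXi : μ (X i ⁻¹' Iic 0) = 0 := by
    simp [measure_preimage_Iic_of_map_eq_expMeasure (hXm i) (hXd i)]
  filter_upwards [measure_eq_zero_iff_ae_notMem.1 hXi] with ω hω
  exact (not_le.1 hω).trans_le (le_ciSup (finite_range fun i => X i ω).bddAbove i)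

lemma indepFun_iSup (hXm : ∀ i, Measurable (X i)) (hGm : Measurable G)
    (hIndep : iIndepFun (fun i : Option ι => Option.elim i G fun k => X k) μ) :
    IndepFun (fun ω => ⨆ i, X i ω) G μ := by
  classical
  have hsome : ∀ i, some i ∈ Finset.univ.image (some : ι → Option ι) := by simp
  have h := hIndep.indepFun_finset (Finset.univ.image some) {none}
    (by simp [Finset.disjoint_singleton_right]) (by rintro (_ | i); exacts [hGm, hXm i])
  exact h.comp (φ := fun v => ⨆ i, v ⟨some i, hsome i⟩) (ψ := fun v => v ⟨none, by simp⟩)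
    (Measurable.iSup fun i => measurable_pi_apply _) (measurable_pi_apply (X := fun _ => ℝ) _)

lemma measure_iSup_le_eq_one_div_card_add_one (hXm : ∀ i, Measurable (X i))
    (hGm : Measurable G)
    (hIndep : iIndepFun (fun i : Option ι => Option.elim i G fun k => X k) μ)
    (hXd : ∀ i, μ.map (X i) = expMeasure 1) (hGd : μ.map G = expMeasure 1) :
    μ {ω | ⨆ i, X i ω ≤ G ω} = ENNReal.ofReal (1 / (Fintype.card ι + 1)) := by
  have := hIndep.isProbabilityMeasure
  set M : Ω → ℝ := fun ω => ⨆ i, X i ω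
  have hMm : Measurable M := Measurable.iSup hXm
  have hle : MeasurableSet {p : ℝ × ℝ | p.2 ≤ p.1} := measurableSet_le measurable_snd measurable_fst
  have hjoint : μ.map (fun ω => (G ω, M ω)) = (expMeasure 1).prod (μ.map M) := by
    rw [← hGd]
    exact (indepFun_iff_map_prod_eq_prod_map_map hGm.aemeasurable hMm.aemeasurable).1
      (indepFun_iSup hXm hGm hIndep).symm
  have hmono : Monotone fun t => μ {ω | M ω ≤ t} :=
    fun s t hst => measure_mono fun ω (hω : M ω ≤ s) => hω.trans hst
  calc μ {ω | M ω ≤ G ω}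
      = ∫⁻ t, μ {ω | M ω ≤ t} ∂expMeasure 1 := by
        rw [show {ω | M ω ≤ G ω} = (fun ω => (G ω, M ω)) ⁻¹' {p | p.2 ≤ p.1} from rfl,
          ← Measure.map_apply (hGm.prodMk hMm) hle, hjoint, Measure.prod_apply hle]
        refine lintegral_congr fun t => ?_
        rw [show Prod.mk t ⁻¹' {p : ℝ × ℝ | p.2 ≤ p.1} = Iic t from rfl,
          Measure.map_apply hMm measurableSet_Iic]
        rfl
    _ = ∫⁻ t in Ioi 0, ENNReal.ofReal ((1 - exp (-t)) ^ Fintype.card ι * exp (-t)) := by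
        rw [lintegral_expMeasure_one hmono.measurable]
        refine setLIntegral_congr_fun measurableSet_Ioi fun t (ht : 0 < t) => ?_
        rw [measure_iSup_le hXm hIndep hXd ht.le, ← ENNReal.ofReal_mul (exp_pos _).le, mul_comm]
    _ = _ := lintegral_one_sub_exp_neg_pow_mul_exp_neg _

lemma setLIntegral_log_div_iSup_le (hXm : ∀ i, Measurable (X i)) (hGm : Measurable G)
    (hIndep : iIndepFun (fun i : Option ι => Option.elim i G fun k => X k) μ)
    (hXd : ∀ i, μ.map (X i) = expMeasure 1) (hGd : μ.map G = expMeasure 1) {n : ℕ}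
    (hn : Fintype.card ι = n + 1) :
    ∫⁻ ω in {ω | ⨆ i, X i ω ≤ G ω}, ENNReal.ofReal (log (G ω / ⨆ i, X i ω)) ∂μ ≤
      ENNReal.ofReal (1 / (n + 1) - 1 / (n + 2) / 3) := by
  have := hIndep.isProbabilityMeasure
  rw [setLIntegral_log_div_eq (Measurable.iSup hXm) hGm (ae_iSup_pos hXm hXd),
    ← setLIntegral_eq_of_support_subset (s := Ioi 0) ?_]
  · calc _ = ∫⁻ t in Ioi 0,
          ENNReal.ofReal (t⁻¹ * ((1 - exp (-t)) ^ (n + 1) * exp (-t))) := by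
          refine setLIntegral_congr_fun measurableSet_Ioi fun t (ht : 0 < t) => ?_
          rw [measure_iSup_le_and_lt hXm hGm hIndep hXd hGd ht.le, hn,
            ENNReal.ofReal_mul (inv_nonneg.2 ht.le)]
      _ ≤ _ := lintegral_inv_mul_one_sub_exp_neg_pow_succ_le n
  · refine Function.support_subset_iff'.2 fun t (ht : ¬ 0 < t) => ?_
    rw [ENNReal.ofReal_eq_zero.2 (inv_nonpos.2 (not_lt.1 ht)), zero_mul]

theorem setIntegral_log_div_iSup_div_measure_le (hXm : ∀ i, Measurable (X i))
    (hGm : Measurable G)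
    (hIndep : iIndepFun (fun i : Option ι => Option.elim i G fun k => X k) μ)
    (hXd : ∀ i, μ.map (X i) = expMeasure 1) (hGd : μ.map G = expMeasure 1) :
    (∫ ω in {ω | ⨆ i, X i ω ≤ G ω}, log (G ω / ⨆ i, X i ω) ∂μ) /
      (μ {ω | ⨆ i, X i ω ≤ G ω}).toReal ≤ 2 / 3 + 1 / Fintype.card ι := by
  obtain ⟨n, hn⟩ := Nat.exists_eq_add_one.2 (Fintype.card_pos (α := ι))
  have hS : MeasurableSet {ω | ⨆ i, X i ω ≤ G ω} := measurableSet_le (Measurable.iSup hXm) hGm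
  have hnonneg : 0 ≤ᵐ[μ.restrict {ω | ⨆ i, X i ω ≤ G ω}] fun ω => log (G ω / ⨆ i, X i ω) := by
    filter_upwards [ae_restrict_mem hS, ae_restrict_of_ae (ae_iSup_pos hXm hXd)] with ω hle hpos
    exact log_nonneg ((one_le_div hpos).2 hle)
  have hnum : ∫ ω in {ω | ⨆ i, X i ω ≤ G ω}, log (G ω / ⨆ i, X i ω) ∂μ ≤
      1 / (n + 1) - 1 / (n + 2) / 3 := by
    rw [integral_eq_lintegral_of_nonneg_ae hnonneg
      (measurable_log.comp (hGm.div (Measurable.iSup hXm))).aestronglyMeasurable]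
    refine ENNReal.toReal_le_of_le_ofReal ?_
      (setLIntegral_log_div_iSup_le hXm hGm hIndep hXd hGd hn)
    field_simp
    nlinarith
  rw [measure_iSup_le_eq_one_div_card_add_one hXm hGm hIndep hXd hGd,
    ENNReal.toReal_ofReal (by positivity), hn, div_le_iff₀ (by positivity)]
  push_cast
  calc _ ≤ 1 / (n + 1 : ℝ) - 1 / (n + 2) / 3 := hnum
    _ = _ := by field_simp; ring

end MaxOfExponentials

theorem stmt7_general {Ω : Type*} [MeasurableSpace Ω] (μ : Measure Ω)
    {K : ℕ} (hK : 2 ≤ K)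
    (X : Fin K → Ω → ℝ) (G : Ω → ℝ)
    (hXm : ∀ i, Measurable (X i)) (hGm : Measurable G)
    (hIndep : iIndepFun
      (fun i : Option (Fin K) => Option.elim i G fun k => X k) μ)
    (hXd : ∀ i, Measure.map (X i) μ = expMeasure 1)
    (hGd : Measure.map G μ = expMeasure 1) :
    (∫ ω in {ω | (⨆ i : Fin K, X i ω) ≤ G ω},
        Real.log (G ω / ⨆ i : Fin K, X i ω) ∂μ) /
      (μ {ω | (⨆ i : Fin K, X i ω) ≤ G ω}).toReal ≤ 2 * Real.log 2 := by
  have : Nonempty (Fin K) := ⟨⟨0, by omega⟩⟩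
  have hK' : (1 : ℝ) / K ≤ 1 / 2 := one_div_le_one_div_of_le two_pos (by exact_mod_cast hK)
  calc _ ≤ 2 / 3 + 1 / (Fintype.card (Fin K) : ℝ) :=
        setIntegral_log_div_iSup_div_measure_le hXm hGm hIndep hXd hGd
    _ ≤ 2 * log 2 := by
        rw [Fintype.card_fin]
        linarith [log_two_gt_d9]

/-- Let `X₁, …, X_K, G` be independent `Exp(1)` random variables, `K ≥ 2`, and
let `M = max(X₁,…,X_K)`.  Then `E[log (G / M) | G ≥ M] ≤ 2 log 2`, where the
conditional expectation given the event `{G ≥ M}` is the integral over that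
event divided by its probability. -/
theorem stmt7 {Ω : Type*} [MeasurableSpace Ω] (μ : Measure Ω)
    [IsProbabilityMeasure μ] {K : ℕ} (hK : 2 ≤ K)
    (X : Fin K → Ω → ℝ) (G : Ω → ℝ)
    (hXm : ∀ i, Measurable (X i)) (hGm : Measurable G)
    (hIndep : iIndepFun
      (fun i : Option (Fin K) => Option.elim i G fun k => X k) μ)
    (hXd : ∀ i, Measure.map (X i) μ = expMeasure 1)
    (hGd : Measure.map G μ = expMeasure 1) :
    (∫ ω in {ω | (⨆ i : Fin K, X i ω) ≤ G ω},
        Real.log (G ω / ⨆ i : Fin K, X i ω) ∂μ) /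
      (μ {ω | (⨆ i : Fin K, X i ω) ≤ G ω}).toReal ≤ 2 * Real.log 2 :=
  stmt7_general μ hK X G hXm hGm hIndep hXd hGd
end

section
/- Let γ > 0 and let μ be a nonnegative random variable. Then the function Ψ : [0,∞) → ℝ defined by Ψ(y) = log(1 + γ·y) − E[log(1 + min(γ, μ)·y)] is nonnegative and concave on [0,∞). -/
/-!
Write `c = min γ μ`, so that `0 ≤ c ≤ γ` and `Ψ(y) = E[log (1 + γ y) - log (1 + c y)]`.
Each integrand is nonnegative because `c ≤ γ`, and concave in `y` because its derivative
`(γ - c) / ((1 + γ y) (1 + c y))` decreases; concavity survives taking expectations.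
-/

open Real Set MeasureTheory

lemma log_one_add_mul_nonneg {c y : ℝ} (hc : 0 ≤ c) (hy : 0 ≤ y) : 0 ≤ log (1 + c * y) :=
  log_nonneg (by nlinarith [mul_nonneg hc hy])

lemma log_one_add_mul_le_log_one_add_mul {c γ y : ℝ} (hc : 0 ≤ c) (hcγ : c ≤ γ) (hy : 0 ≤ y) :
    log (1 + c * y) ≤ log (1 + γ * y) := by
  have : 0 < 1 + c * y := by positivity
  gcongr

lemma hasDerivAt_log_one_add_mul {c z : ℝ} (h : 0 < 1 + c * z) :
    HasDerivAt (fun y ↦ log (1 + c * y)) (c / (1 + c * z)) z := by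
  simpa [div_eq_inv_mul] using
    ((hasDerivAt_id z).const_mul c |>.const_add 1).log h.ne'

lemma concaveOn_log_one_add_mul_sub {c γ : ℝ} (hc : 0 ≤ c) (hcγ : c ≤ γ) :
    ConcaveOn ℝ (Ici 0) (fun y ↦ log (1 + γ * y) - log (1 + c * y)) := by
  have hγ : 0 ≤ γ := hc.trans hcγ
  have hderiv : ∀ z ∈ Ici (0 : ℝ), HasDerivAt (fun y ↦ log (1 + γ * y) - log (1 + c * y))
      ((γ - c) / ((1 + γ * z) * (1 + c * z))) z := by
    intro z (hz : 0 ≤ z)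
    have hγz : 0 < 1 + γ * z := by positivity
    have hcz : 0 < 1 + c * z := by positivity
    refine ((hasDerivAt_log_one_add_mul hγz).sub (hasDerivAt_log_one_add_mul hcz)).congr_deriv ?_
    field_simp
    ring
  refine AntitoneOn.concaveOn_of_deriv (convex_Ici 0)
    (fun z hz ↦ (hderiv z hz).continuousAt.continuousWithinAt)
    (fun z hz ↦ (hderiv z (interior_subset hz)).differentiableAt.differentiableWithinAt) ?_
  rw [interior_Ici]
  intro x (hx : 0 < x) y (hy : 0 < y) hxy
  rw [(hderiv x hx.le).deriv, (hderiv y hy.le).deriv]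
  gcongr

section Integral

variable {Ω : Type*} [MeasurableSpace Ω] {ν : Measure Ω}

lemma concaveOn_integral {E : Type*} [AddCommGroup E] [Module ℝ E] {s : Set E}
    {f : Ω → E → ℝ} (hs : Convex ℝ s) (hf : ∀ᵐ ω ∂ν, ConcaveOn ℝ s (f ω))
    (hint : ∀ x ∈ s, Integrable (fun ω ↦ f ω x) ν) :
    ConcaveOn ℝ s (fun x ↦ ∫ ω, f ω x ∂ν) := by
  refine ⟨hs, fun x hx y hy a b ha hb hab ↦ ?_⟩
  have hfx := (hint x hx).const_mul a
  have hfy := (hint y hy).const_mul b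
  calc a * ∫ ω, f ω x ∂ν + b * ∫ ω, f ω y ∂ν
      = ∫ ω, (a * f ω x + b * f ω y) ∂ν := by
        rw [integral_add hfx hfy, integral_const_mul, integral_const_mul]
    _ ≤ ∫ ω, f ω (a • x + b • y) ∂ν :=
        integral_mono_ae (hfx.add hfy)
          (hint _ (hs hx hy ha hb hab)) (hf.mono fun ω hω ↦ hω.2 hx hy ha hb hab)

lemma integrable_log_one_add_mul [IsFiniteMeasure ν] {c : Ω → ℝ} {γ y : ℝ}
    (hcm : AEMeasurable c ν) (hc : ∀ᵐ ω ∂ν, 0 ≤ c ω ∧ c ω ≤ γ) (hy : 0 ≤ y) :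
    Integrable (fun ω ↦ log (1 + c ω * y)) ν := by
  refine .of_bound
    (measurable_log.comp_aemeasurable ((hcm.mul_const y).const_add 1)).aestronglyMeasurable
    (log (1 + γ * y)) (hc.mono fun ω ⟨hc0, hcγ⟩ ↦ ?_)
  rw [norm_of_nonneg (log_one_add_mul_nonneg hc0 hy)]
  exact log_one_add_mul_le_log_one_add_mul hc0 hcγ hy

end Integral

/-- Let `γ > 0` and let `W` be a nonnegative random variable on a probability
space.  Then `Ψ(y) = log(1 + γ·y) − E[log(1 + min(γ, W)·y)]` is nonnegative and
concave on `[0, ∞)`. -/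
theorem stmt12 {Ω : Type*} [MeasurableSpace Ω] (ν : Measure Ω)
    [IsProbabilityMeasure ν] {γ : ℝ} (hγ : 0 < γ)
    (W : Ω → ℝ) (hWm : Measurable W) (hW : ∀ ω, 0 ≤ W ω) :
    (∀ y : ℝ, 0 ≤ y →
      0 ≤ Real.log (1 + γ * y) - ∫ ω, Real.log (1 + min γ (W ω) * y) ∂ν) ∧
    ConcaveOn ℝ (Set.Ici 0)
      (fun y : ℝ =>
        Real.log (1 + γ * y) - ∫ ω, Real.log (1 + min γ (W ω) * y) ∂ν) := by
  have hmin : ∀ ω, 0 ≤ min γ (W ω) ∧ min γ (W ω) ≤ γ :=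
    fun ω ↦ ⟨le_min hγ.le (hW ω), min_le_left _ _⟩
  have hint : ∀ y ∈ Ici (0 : ℝ), Integrable (fun ω ↦ log (1 + min γ (W ω) * y)) ν :=
    fun y hy ↦ integrable_log_one_add_mul (measurable_const.min hWm).aemeasurable
      (.of_forall hmin) hy
  have hΨ : EqOn (fun y ↦ ∫ ω, (log (1 + γ * y) - log (1 + min γ (W ω) * y)) ∂ν)
      (fun y ↦ log (1 + γ * y) - ∫ ω, log (1 + min γ (W ω) * y) ∂ν) (Ici 0) := fun y hy ↦ by
    simp only [integral_sub (integrable_const _) (hint y hy), integral_const, probReal_univ,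
      one_smul]
  refine ⟨fun y hy ↦ (integral_nonneg fun ω ↦ sub_nonneg.2
      (log_one_add_mul_le_log_one_add_mul (hmin ω).1 (hmin ω).2 hy)).trans_eq (hΨ hy), ?_⟩
  refine (concaveOn_integral (convex_Ici 0) (.of_forall fun ω ↦ ?_) fun y hy ↦
    (integrable_const _).sub (hint y hy)).congr hΨ
  exact concaveOn_log_one_add_mul_sub (hmin ω).1 (hmin ω).2
end

section
/- Let K ≥ 1 and let H₁,…,H_K, G be independent Exp(1) random variables with M = max(H₁,…,H_K). Then lim_{P̄ → ∞} R⁺_K(P̄) = E[max(0, log(M/G))]. -/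
/-!
Pointwise, `(1 + M p) / (1 + G p)` lies between `1` and `M / G`, so every admissible allocation
has rate at most `E[max(0, log(M/G))]`. Conversely the constant allocation `p ≡ P̄` is admissible,
and by dominated convergence, with the same pointwise bound as majorant, its rate tends to that
expectation as `P̄ → ∞`. The majorant is integrable because `log(M/G) ≤ M + 2 G^(-1/2)` and both
`M` and `G^(-1/2)` have finite mean.
-/

open MeasureTheory ProbabilityTheory Real Filter

/-- The achievable (lower-bound) secrecy sum-rate `R⁻(P̄)`: the supremum, over
measurable power allocations `p : [0,∞) → [0,∞)` with `E[p(M)] ≤ P̄`, of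
`E[log(1 + M·p(M)) − log(1 + G·p(M))]`. -/
noncomputable def Rminus {Ω : Type*} [MeasurableSpace Ω] (μ : Measure Ω)
    (M G : Ω → ℝ) (P : ℝ) : ℝ :=
  sSup {r : ℝ | ∃ p : ℝ → ℝ, Measurable p ∧ (∀ x, 0 ≤ p x) ∧
    (∫ ω, p (M ω) ∂μ) ≤ P ∧
    r = ∫ ω, (Real.log (1 + M ω * p (M ω)) - Real.log (1 + G ω * p (M ω))) ∂μ}

/-- The upper bound `R⁺(P̄)`: the supremum, over measurable power allocations
`p : [0,∞) → [0,∞)` with `E[p(M)] ≤ P̄`, of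
`E[max(0, log(1 + M·p(M)) − log(1 + G·p(M)))]`. -/
noncomputable def Rplus {Ω : Type*} [MeasurableSpace Ω] (μ : Measure Ω)
    (M G : Ω → ℝ) (P : ℝ) : ℝ :=
  sSup {r : ℝ | ∃ p : ℝ → ℝ, Measurable p ∧ (∀ x, 0 ≤ p x) ∧
    (∫ ω, p (M ω) ∂μ) ≤ P ∧
    r = ∫ ω, max 0
      (Real.log (1 + M ω * p (M ω)) - Real.log (1 + G ω * p (M ω))) ∂μ}

open scoped Topology

lemma max_zero_log_sub_log_le {m g p : ℝ} (hm : 0 < m) (hg : 0 < g) (hp : 0 ≤ p) :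
    max 0 (log (1 + m * p) - log (1 + g * p)) ≤ max 0 (log (m / g)) := by
  have hmp : 0 < 1 + m * p := by positivity
  have hgp : 0 < 1 + g * p := by positivity
  refine max_le (le_max_left _ _) ?_
  rw [← log_div hmp.ne' hgp.ne']
  rcases le_or_gt m g with hmg | hgm
  · refine le_max_of_le_left (log_nonpos (by positivity) ?_)
    exact (div_le_one hgp).2 (by nlinarith)
  · refine le_max_of_le_right (log_le_log (by positivity) ?_)
    rw [div_le_div_iff₀ hgp hg]
    nlinarith

lemma tendsto_log_one_add_mul_sub_log_one_add_mul {m g : ℝ} (hm : 0 < m) (hg : 0 < g) :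
    Tendsto (fun P => log (1 + m * P) - log (1 + g * P)) atTop (𝓝 (log (m / g))) := by
  have hratio : Tendsto (fun P : ℝ => (P⁻¹ + m) / (P⁻¹ + g)) atTop (𝓝 (m / g)) := by
    have h := (tendsto_inv_atTop_zero.add_const m).div (tendsto_inv_atTop_zero.add_const g)
      (by simpa using hg.ne')
    rwa [zero_add, zero_add] at h
  refine ((continuousAt_log (div_pos hm hg).ne').tendsto.comp hratio).congr' ?_
  filter_upwards [eventually_gt_atTop 0] with P hP
  have hratio_eq : (P⁻¹ + m) / (P⁻¹ + g) = (1 + m * P) / (1 + g * P) := by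
    field_simp
  rw [Function.comp_apply, hratio_eq, log_div (by positivity) (by positivity)]

-- `1 / g` is not integrable against `Exp(1)`, but `g^(-1/2)` is.
lemma max_zero_log_div_le {m g : ℝ} (hm : 0 < m) (hg : 0 < g) :
    max 0 (log (m / g)) ≤ m + 2 * g ^ (-(1 / 2) : ℝ) := by
  have hlog_inv : log g⁻¹ ≤ 2 * g ^ (-(1 / 2) : ℝ) := by
    have := log_le_rpow_div (inv_nonneg.2 hg.le) (by norm_num : (0 : ℝ) < 1 / 2)
    rwa [inv_rpow hg.le, ← rpow_neg hg.le, div_eq_mul_inv, mul_comm, show (1 / 2 : ℝ)⁻¹ = 2 by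
      norm_num] at this
  rw [div_eq_mul_inv, log_mul hm.ne' (inv_ne_zero hg.ne')]
  exact max_le (by positivity) (by linarith [log_le_self hm.le])

lemma integrable_iSup_of_finite {Ω ι : Type*} [MeasurableSpace Ω] {μ : Measure Ω} [Fintype ι]
    [Nonempty ι] {f : ι → Ω → ℝ} (hf : ∀ i, Integrable (f i) μ) :
    Integrable (fun ω => ⨆ i, f i ω) μ := by
  refine (integrable_finsetSum Finset.univ fun i _ => (hf i).abs).mono'
    (AEMeasurable.iSup fun i => (hf i).aemeasurable).aestronglyMeasurable (.of_forall fun ω => ?_)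
  obtain ⟨j, hj⟩ := exists_eq_ciSup_of_finite (f := fun i => f i ω)
  rw [← hj, norm_eq_abs]
  exact Finset.single_le_sum (fun i _ => abs_nonneg (f i ω)) (Finset.mem_univ j)

section SecrecyRate

variable {Ω : Type*} [MeasurableSpace Ω] {μ : Measure Ω} {M G : Ω → ℝ}

lemma integrable_max_zero_log_div (hM : Integrable M μ) (hG : AEMeasurable G μ)
    (hG_rpow : Integrable (fun ω => G ω ^ (-(1 / 2) : ℝ)) μ)
    (hMpos : ∀ᵐ ω ∂μ, 0 < M ω) (hGpos : ∀ᵐ ω ∂μ, 0 < G ω) :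
    Integrable (fun ω => max 0 (log (M ω / G ω))) μ := by
  refine (hM.add (hG_rpow.const_mul 2)).mono' ?_ ?_
  · exact (aemeasurable_const.max (hM.aemeasurable.div hG).log).aestronglyMeasurable
  · filter_upwards [hMpos, hGpos] with ω hm hg
    rw [norm_of_nonneg (le_max_left _ _)]
    exact max_zero_log_div_le hm hg

noncomputable def secrecyRate (μ : Measure Ω) (M G : Ω → ℝ) (p : ℝ → ℝ) : ℝ :=
  ∫ ω, max 0 (log (1 + M ω * p (M ω)) - log (1 + G ω * p (M ω))) ∂μ

variable (hMpos : ∀ᵐ ω ∂μ, 0 < M ω) (hGpos : ∀ᵐ ω ∂μ, 0 < G ω)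
  (hint : Integrable (fun ω => max 0 (log (M ω / G ω))) μ)
include hMpos hGpos hint

lemma secrecyRate_le {p : ℝ → ℝ} (hp : ∀ x, 0 ≤ p x) :
    secrecyRate μ M G p ≤ ∫ ω, max 0 (log (M ω / G ω)) ∂μ := by
  refine integral_mono_of_nonneg (.of_forall fun ω => le_max_left _ _) hint ?_
  filter_upwards [hMpos, hGpos] with ω hm hg
  exact max_zero_log_sub_log_le hm hg (hp _)

lemma Rplus_le {P : ℝ} (hP : 0 ≤ P) [IsProbabilityMeasure μ] :
    Rplus μ M G P ≤ ∫ ω, max 0 (log (M ω / G ω)) ∂μ := by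
  refine csSup_le ⟨_, fun _ => P, measurable_const, fun _ => hP, by simp, rfl⟩ ?_
  rintro r ⟨p, -, hp, -, rfl⟩
  exact secrecyRate_le hMpos hGpos hint hp

lemma secrecyRate_const_le_Rplus {P : ℝ} (hP : 0 ≤ P) [IsProbabilityMeasure μ] :
    secrecyRate μ M G (fun _ => P) ≤ Rplus μ M G P := by
  refine le_csSup ⟨∫ ω, max 0 (log (M ω / G ω)) ∂μ, ?_⟩
    ⟨fun _ => P, measurable_const, fun _ => hP, by simp, rfl⟩
  rintro r ⟨p, -, hp, -, rfl⟩
  exact secrecyRate_le hMpos hGpos hint hp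

lemma tendsto_secrecyRate_const (hM : Measurable M) (hG : Measurable G) :
    Tendsto (fun P => secrecyRate μ M G (fun _ => P)) atTop
      (𝓝 (∫ ω, max 0 (log (M ω / G ω)) ∂μ)) := by
  refine tendsto_integral_filter_of_dominated_convergence _ (.of_forall fun P => by fun_prop)
    ?_ hint ?_
  · filter_upwards [eventually_ge_atTop 0] with P hP
    filter_upwards [hMpos, hGpos] with ω hm hg
    rw [norm_of_nonneg (le_max_left _ _)]
    exact max_zero_log_sub_log_le hm hg hP
  · filter_upwards [hMpos, hGpos] with ω hm hg
    exact tendsto_const_nhds.max (tendsto_log_one_add_mul_sub_log_one_add_mul hm hg)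

theorem tendsto_Rplus_atTop [IsProbabilityMeasure μ] (hM : Measurable M) (hG : Measurable G) :
    Tendsto (Rplus μ M G) atTop (𝓝 (∫ ω, max 0 (log (M ω / G ω)) ∂μ)) := by
  refine tendsto_of_tendsto_of_tendsto_of_le_of_le'
    (tendsto_secrecyRate_const hMpos hGpos hint hM hG) tendsto_const_nhds ?_ ?_
  · filter_upwards [eventually_ge_atTop 0] with P hP
    exact secrecyRate_const_le_Rplus hMpos hGpos hint hP
  · filter_upwards [eventually_ge_atTop 0] with P hP
    exact Rplus_le hMpos hGpos hint hP

end SecrecyRate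

section Exponential

variable {Ω : Type*} [MeasurableSpace Ω] {μ : Measure Ω}

lemma integrable_expMeasure_of_integrableOn {f : ℝ → ℝ}
    (h : IntegrableOn (fun x => f x * exp (-x)) (Set.Ioi 0)) :
    Integrable f (expMeasure 1) := by
  have hmeas : Measurable (gammaPDF 1 1) := (measurable_gammaPDFReal 1 1).ennreal_ofReal
  rw [expMeasure, gammaMeasure, integrable_withDensity_iff hmeas
    (.of_forall fun x => ENNReal.ofReal_lt_top)]
  have hdensity : (fun x => f x * (gammaPDF 1 1 x).toReal)
      = Set.indicator (Set.Ici 0) (fun x => f x * exp (-x)) := by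
    funext x
    rw [gammaPDF, ENNReal.toReal_ofReal (gammaPDFReal_nonneg zero_lt_one zero_lt_one x)]
    by_cases hx : 0 ≤ x <;> simp [gammaPDFReal, hx, Gamma_one]
  rw [hdensity]
  exact ((integrableOn_Ici_iff_integrableOn_Ioi).2 h).integrable_indicator measurableSet_Ici

lemma integrable_rpow_expMeasure {s : ℝ} (hs : -1 < s) :
    Integrable (fun x : ℝ => x ^ s) (expMeasure 1) := by
  refine integrable_expMeasure_of_integrableOn <|
    (GammaIntegral_convergent (s := s + 1) (by linarith)).congr_fun (fun x _ => ?_)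
      measurableSet_Ioi
  rw [add_sub_cancel_right, mul_comm]

lemma ae_pos_expMeasure : ∀ᵐ x ∂expMeasure 1, 0 < x := by
  have := isProbabilityMeasure_expMeasure zero_lt_one
  have hIic : expMeasure 1 (Set.Iic 0) = 0 := by
    rw [← ofReal_cdf, cdf_expMeasure_eq zero_lt_one]
    simp
  simp only [ae_iff, not_lt]
  exact hIic

lemma ae_pos_of_map_eq_expMeasure {X : Ω → ℝ} (hX : Measurable X)
    (hXd : μ.map X = expMeasure 1) : ∀ᵐ ω ∂μ, 0 < X ω :=
  ae_of_ae_map hX.aemeasurable (hXd ▸ ae_pos_expMeasure)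

lemma integrable_rpow_of_map_eq_expMeasure {X : Ω → ℝ} (hX : Measurable X)
    (hXd : μ.map X = expMeasure 1) {s : ℝ} (hs : -1 < s) :
    Integrable (fun ω => X ω ^ s) μ :=
  (integrable_map_measure (g := fun x : ℝ => x ^ s) (by fun_prop) hX.aemeasurable).1
    (hXd ▸ integrable_rpow_expMeasure hs)

end Exponential

theorem stmt15_general {Ω : Type*} [MeasurableSpace Ω] (μ : Measure Ω)
    [IsProbabilityMeasure μ] {K : ℕ} (hK : 1 ≤ K)
    (H : Fin K → Ω → ℝ) (G : Ω → ℝ)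
    (hHm : ∀ i, Measurable (H i)) (hGm : Measurable G)
    (hHd : ∀ i, Measure.map (H i) μ = expMeasure 1)
    (hGd : Measure.map G μ = expMeasure 1) :
    Filter.Tendsto (fun P : ℝ => Rplus μ (fun ω => ⨆ i : Fin K, H i ω) G P)
      Filter.atTop
      (nhds (∫ ω, max 0 (Real.log ((⨆ i : Fin K, H i ω) / G ω)) ∂μ)) := by
  have i₀ : Fin K := ⟨0, hK⟩
  have hGpos := ae_pos_of_map_eq_expMeasure hGm hGd
  have hMpos : ∀ᵐ ω ∂μ, 0 < ⨆ i, H i ω := by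
    filter_upwards [ae_pos_of_map_eq_expMeasure (hHm i₀) (hHd i₀)] with ω hω
    exact hω.trans_le (le_ciSup (f := fun i => H i ω) (Finite.bddAbove_range _) i₀)
  have hMint : Integrable (fun ω => ⨆ i, H i ω) μ := by
    have : Nonempty (Fin K) := ⟨i₀⟩
    refine integrable_iSup_of_finite fun i => ?_
    simpa using integrable_rpow_of_map_eq_expMeasure (hHm i) (hHd i) (s := 1) (by norm_num)
  have hint := integrable_max_zero_log_div hMint hGm.aemeasurable
    (integrable_rpow_of_map_eq_expMeasure hGm hGd (by norm_num)) hMpos hGpos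
  exact tendsto_Rplus_atTop hMpos hGpos hint (.iSup hHm) hGm

/-- Let `H₁,…,H_K, G` be independent `Exp(1)` random variables (`K ≥ 1`) and
`M = max(H₁,…,H_K)`.  Then `lim_{P̄ → ∞} R⁺_K(P̄) = E[max(0, log (M/G))]`. -/
theorem stmt15 {Ω : Type*} [MeasurableSpace Ω] (μ : Measure Ω)
    [IsProbabilityMeasure μ] {K : ℕ} (hK : 1 ≤ K)
    (H : Fin K → Ω → ℝ) (G : Ω → ℝ)
    (hHm : ∀ i, Measurable (H i)) (hGm : Measurable G)
    (hIndep : iIndepFun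
      (fun i : Option (Fin K) => Option.elim i G fun k => H k) μ)
    (hHd : ∀ i, Measure.map (H i) μ = expMeasure 1)
    (hGd : Measure.map G μ = expMeasure 1) :
    Filter.Tendsto (fun P : ℝ => Rplus μ (fun ω => ⨆ i : Fin K, H i ω) G P)
      Filter.atTop
      (nhds (∫ ω, max 0 (Real.log ((⨆ i : Fin K, H i ω) / G ω)) ∂μ)) :=
  stmt15_general μ hK H G hHm hGm hHd hGd
end
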